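/- arXiv:1609.03891 — 2 statements merged into one kernel-verified Lean document; each statement's English description precedes it below -/
import Mathlib

section
/- Let μ = (μ(t); 0 ≤ t ≤ 1) be a path in the space of permutons with μ(0) the identity permuton and μ(1) the reverse permuton. Then the energy of μ with respect to the 2-Wasserstein metric satisfies E(μ) ≥ π²/6. -/
open MeasureTheory Set Filter
open scoped ENNReal Real Topology

/-- The uniform probability measure on [-1,1]. -/
noncomputable def unif : Measure ℝ := (2 : ℝ≥0∞)⁻¹ • (volume.restrict (Icc (-1 : ℝ) 1))

/-- `t 0 = 0 < t 1 < ... < t k = 1` is a finite partition of [0,1]. -/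
def IsPartition (k : ℕ) (t : ℕ → ℝ) : Prop :=
  0 < k ∧ t 0 = 0 ∧ t k = 1 ∧ ∀ i < k, t i < t (i + 1)

/-- The energy of a path along partitions of [0,1], expressed in terms of the
squared-distance function `D s t` between the points `γ s` and `γ t` of the path:
`E = sup_Π Σ_i d(γ(t_i),γ(t_{i-1}))² / (t_i - t_{i-1})`. -/
noncomputable def energyOf (D : ℝ → ℝ → ℝ) : ℝ≥0∞ :=
  ⨆ (k : ℕ) (t : ℕ → ℝ) (_ : IsPartition k t),
    ENNReal.ofReal (∑ i ∈ Finset.range k, D (t i) (t (i + 1)) / (t (i + 1) - t i))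

/-- Optimal transportation cost between two measures for the cost `c`. -/
noncomputable def W2sqCost {K : Type*} [MeasurableSpace K] (c : K × K → ℝ)
    (μ ν : Measure K) : ℝ :=
  sInf {e | ∃ m : Measure (K × K), IsProbabilityMeasure m ∧
    m.map Prod.fst = μ ∧ m.map Prod.snd = ν ∧ e = ∫ p, c p ∂m}

/-- The squared 2-Wasserstein distance between measures on the plane,
with the Euclidean metric: `W₂(μ,ν)² = inf over couplings of E[‖V-W‖²]`. -/
noncomputable def W2sqE (μ ν : Measure (ℝ × ℝ)) : ℝ :=
  W2sqCost (fun p => (p.1.1 - p.2.1) ^ 2 + (p.1.2 - p.2.2) ^ 2) μ ν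

/-- A permuton: a Borel probability measure on the plane whose coordinate marginals
are uniform on [-1,1]. -/
def IsPermuton (μ : Measure (ℝ × ℝ)) : Prop :=
  IsProbabilityMeasure μ ∧ μ.map Prod.fst = unif ∧ μ.map Prod.snd = unif

/-- The identity permuton, the law of (X, X) with X ~ Uniform[-1,1]. -/
noncomputable def idPermuton : Measure (ℝ × ℝ) := unif.map (fun x => (x, x))

/-- The reverse permuton, the law of (X, -X) with X ~ Uniform[-1,1]. -/
noncomputable def revPermuton : Measure (ℝ × ℝ) := unif.map (fun x => (x, -x))

/-!
For a permuton, the law of `(X, Y)`, put `J = E (X - Y)²` and `K = E (X + Y)²`. As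
`E X² = E Y² = 1/3`, `J + K = 4/3`: the point `(√J, √K)` lies on a quarter circle of radius
`2/√3`, at an angle `θ` which is `0` for the identity and `π/2` for the reverse permuton. In the
coordinates `X - Y`, `X + Y` the quadratic cost of a coupling is half a sum of two `L²` distances,
so by the reverse triangle inequality in `L²` the squared Wasserstein distance is at least half the
squared chord between the two points of the circle, `(8/3) sin² (Δθ / 2)`. On the uniform
partition into `n` pieces, finite energy forces every increment of `θ` to be `O(n^{-1/2})`, where
chord and arc agree up to a factor `1 - O(1/n)`; Cauchy–Schwarz then bounds the energy below by
`(2/3) (π/2)² (1 - O(1/n))²`, which tends to `π²/6`.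
-/

open Real

section L2

variable {α : Type*} [MeasurableSpace α] {m : Measure α} {f g : α → ℝ}

theorem integral_sub_sq (hf : MemLp f 2 m) (hg : MemLp g 2 m) :
    ∫ a, (f a - g a) ^ 2 ∂m = ∫ a, f a ^ 2 ∂m - 2 * ∫ a, f a * g a ∂m + ∫ a, g a ^ 2 ∂m := by
  have hfg : Integrable (fun a => 2 * (f a * g a)) m := (hf.integrable_mul hg).const_mul 2
  have hf2g : Integrable (fun a => f a ^ 2 - 2 * (f a * g a)) m := hf.integrable_sq.sub hfg
  simp only [sub_sq, mul_assoc]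
  rw [integral_add hf2g hg.integrable_sq, integral_sub hf.integrable_sq hfg, integral_const_mul]

theorem integral_mul_sq_le_mul_integral_sq (hf : MemLp f 2 m) (hg : MemLp g 2 m) :
    (∫ a, f a * g a ∂m) ^ 2 ≤ (∫ a, f a ^ 2 ∂m) * ∫ a, g a ^ 2 ∂m := by
  have hquad : ∀ x : ℝ, 0 ≤ (∫ a, g a ^ 2 ∂m) * (x * x) + (-2 * ∫ a, f a * g a ∂m) * x
      + ∫ a, f a ^ 2 ∂m := fun x => by
    have h := integral_sub_sq hf (hg.const_mul x)
    simp only [mul_pow, mul_left_comm (f _), integral_const_mul] at h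
    have : 0 ≤ ∫ a, (f a - x * g a) ^ 2 ∂m := integral_nonneg fun a => sq_nonneg _
    linarith
  have := discrim_le_zero hquad
  rw [discrim] at this
  nlinarith

theorem sq_sqrt_integral_sq_sub_le (hf : MemLp f 2 m) (hg : MemLp g 2 m) :
    (√(∫ a, f a ^ 2 ∂m) - √(∫ a, g a ^ 2 ∂m)) ^ 2 ≤ ∫ a, (f a - g a) ^ 2 ∂m := by
  have hA : 0 ≤ ∫ a, f a ^ 2 ∂m := integral_nonneg fun a => sq_nonneg (f a)
  have hB : 0 ≤ ∫ a, g a ^ 2 ∂m := integral_nonneg fun a => sq_nonneg (g a)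
  have hcs : ∫ a, f a * g a ∂m ≤ √(∫ a, f a ^ 2 ∂m) * √(∫ a, g a ^ 2 ∂m) := by
    rw [← sqrt_mul hA]
    exact le_sqrt_of_sq_le (integral_mul_sq_le_mul_integral_sq hf hg)
  rw [integral_sub_sq hf hg, sub_sq, sq_sqrt hA, sq_sqrt hB]
  linarith

end L2

instance isProbabilityMeasure_unif : IsProbabilityMeasure unif := by
  constructor
  rw [unif, Measure.smul_apply, Measure.restrict_apply MeasurableSet.univ, univ_inter,
    volume_Icc]
  norm_num [ENNReal.inv_mul_cancel]

theorem integral_sq_unif : ∫ x, x ^ 2 ∂unif = 1 / 3 := by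
  rw [unif, integral_smul_measure, integral_Icc_eq_integral_Ioc,
    ← intervalIntegral.integral_of_le (by norm_num), integral_pow]
  norm_num

theorem memLp_id_unif : MemLp id 2 unif := by
  refine MemLp.of_bound aestronglyMeasurable_id 1 ?_
  filter_upwards [Measure.ae_smul_measure (ae_restrict_mem measurableSet_Icc) _] with x hx
  exact abs_le.2 hx

section MapEqUnif

variable {β : Type*} [MeasurableSpace β] {m : Measure β} {g : β → ℝ}

theorem memLp_two_of_map_eq_unif (hg : Measurable g) (h : m.map g = unif) : MemLp g 2 m := by
  have hid : MemLp id 2 (m.map g) := h ▸ memLp_id_unif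
  exact (memLp_map_measure_iff hid.1 hg.aemeasurable).1 hid

theorem integral_sq_of_map_eq_unif (hg : Measurable g) (h : m.map g = unif) :
    ∫ b, g b ^ 2 ∂m = 1 / 3 := by
  rw [← integral_sq_unif, ← h, integral_map hg.aemeasurable (by fun_prop)]

end MapEqUnif

section Moments

variable {β : Type*} [MeasurableSpace β] {m : Measure β} {ν : Measure (ℝ × ℝ)}

noncomputable def momentSub (ν : Measure (ℝ × ℝ)) : ℝ := ∫ p, (p.1 - p.2) ^ 2 ∂ν

noncomputable def momentAdd (ν : Measure (ℝ × ℝ)) : ℝ := ∫ p, (p.1 + p.2) ^ 2 ∂ν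

theorem momentSub_nonneg (ν : Measure (ℝ × ℝ)) : 0 ≤ momentSub ν :=
  integral_nonneg fun _ => sq_nonneg _

theorem momentAdd_nonneg (ν : Measure (ℝ × ℝ)) : 0 ≤ momentAdd ν :=
  integral_nonneg fun _ => sq_nonneg _

theorem momentSub_map {f : β → ℝ × ℝ} (hf : Measurable f) :
    momentSub (m.map f) = ∫ b, ((f b).1 - (f b).2) ^ 2 ∂m :=
  integral_map hf.aemeasurable (by fun_prop)

theorem momentAdd_map {f : β → ℝ × ℝ} (hf : Measurable f) :
    momentAdd (m.map f) = ∫ b, ((f b).1 + (f b).2) ^ 2 ∂m :=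
  integral_map hf.aemeasurable (by fun_prop)

theorem momentSub_idPermuton : momentSub idPermuton = 0 := by
  simp [idPermuton, momentSub_map (by fun_prop : Measurable fun x : ℝ => (x, x))]

theorem momentAdd_revPermuton : momentAdd revPermuton = 0 := by
  simp [revPermuton, momentAdd_map (by fun_prop : Measurable fun x : ℝ => (x, -x))]

theorem IsPermuton.map_fst_comp (h : IsPermuton ν) {f : β → ℝ × ℝ} (hf : Measurable f)
    (hm : m.map f = ν) : m.map (fun b => (f b).1) = unif := by
  rw [← h.2.1, ← hm, Measure.map_map measurable_fst hf]
  rfl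

theorem IsPermuton.map_snd_comp (h : IsPermuton ν) {f : β → ℝ × ℝ} (hf : Measurable f)
    (hm : m.map f = ν) : m.map (fun b => (f b).2) = unif := by
  rw [← h.2.2, ← hm, Measure.map_map measurable_snd hf]
  rfl

theorem momentSub_add_momentAdd (h : IsPermuton ν) : momentSub ν + momentAdd ν = 4 / 3 := by
  have hx := memLp_two_of_map_eq_unif measurable_fst h.2.1
  have hy := memLp_two_of_map_eq_unif measurable_snd h.2.2
  calc momentSub ν + momentAdd ν = ∫ p, (2 * p.1 ^ 2 + 2 * p.2 ^ 2) ∂ν := by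
        rw [momentSub, momentAdd, ← integral_add (by exact (hx.sub hy).integrable_sq)
          (by exact (hx.add hy).integrable_sq)]
        congr with p
        ring
    _ = 4 / 3 := by
        rw [integral_add (by exact hx.integrable_sq.const_mul 2)
          (by exact hy.integrable_sq.const_mul 2), integral_const_mul, integral_const_mul,
          integral_sq_of_map_eq_unif measurable_fst h.2.1,
          integral_sq_of_map_eq_unif measurable_snd h.2.2]
        norm_num

end Moments

section Coupling

variable {νs νt : Measure (ℝ × ℝ)}

theorem le_integral_cost_of_coupling (hs : IsPermuton νs) (ht : IsPermuton νt)
    {m : Measure ((ℝ × ℝ) × (ℝ × ℝ))} (h1 : m.map Prod.fst = νs) (h2 : m.map Prod.snd = νt) :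
    ((√(momentSub νs) - √(momentSub νt)) ^ 2 + (√(momentAdd νs) - √(momentAdd νt)) ^ 2) / 2
      ≤ ∫ q, ((q.1.1 - q.2.1) ^ 2 + (q.1.2 - q.2.2) ^ 2) ∂m := by
  have hx := memLp_two_of_map_eq_unif (by fun_prop) (hs.map_fst_comp measurable_fst h1)
  have hy := memLp_two_of_map_eq_unif (by fun_prop) (hs.map_snd_comp measurable_fst h1)
  have hx' := memLp_two_of_map_eq_unif (by fun_prop) (ht.map_fst_comp measurable_snd h2)
  have hy' := memLp_two_of_map_eq_unif (by fun_prop) (ht.map_snd_comp measurable_snd h2)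
  have hu : MemLp (fun q : (ℝ × ℝ) × (ℝ × ℝ) => q.1.1 - q.1.2) 2 m := hx.sub hy
  have hu' : MemLp (fun q : (ℝ × ℝ) × (ℝ × ℝ) => q.2.1 - q.2.2) 2 m := hx'.sub hy'
  have hv : MemLp (fun q : (ℝ × ℝ) × (ℝ × ℝ) => q.1.1 + q.1.2) 2 m := hx.add hy
  have hv' : MemLp (fun q : (ℝ × ℝ) × (ℝ × ℝ) => q.2.1 + q.2.2) 2 m := hx'.add hy'
  have hsub := sq_sqrt_integral_sq_sub_le hu hu'
  have hadd := sq_sqrt_integral_sq_sub_le hv hv'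
  rw [← h1, ← h2, momentSub_map measurable_fst, momentSub_map measurable_snd,
    momentAdd_map measurable_fst, momentAdd_map measurable_snd]
  calc _ ≤ (∫ q, (q.1.1 - q.1.2 - (q.2.1 - q.2.2)) ^ 2 ∂m
        + ∫ q, (q.1.1 + q.1.2 - (q.2.1 + q.2.2)) ^ 2 ∂m) / 2 := by gcongr
    _ = ∫ q, ((q.1.1 - q.2.1) ^ 2 + (q.1.2 - q.2.2) ^ 2) ∂m := by
      rw [← integral_add (by exact (hu.sub hu').integrable_sq)
        (by exact (hv.sub hv').integrable_sq), ← integral_div]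
      congr with q
      ring

theorem le_W2sqE_of_isPermuton (hs : IsPermuton νs) (ht : IsPermuton νt) :
    ((√(momentSub νs) - √(momentSub νt)) ^ 2 + (√(momentAdd νs) - √(momentAdd νt)) ^ 2) / 2
      ≤ W2sqE νs νt := by
  have := hs.1
  have := ht.1
  refine le_csInf ⟨_, νs.prod νt, inferInstance, by simp, by simp, rfl⟩ ?_
  rintro e ⟨m, -, h1, h2, rfl⟩
  exact le_integral_cost_of_coupling hs ht h1 h2

end Coupling

section Angle

variable {ν νs νt : Measure (ℝ × ℝ)}

noncomputable def permutonAngle (ν : Measure (ℝ × ℝ)) : ℝ := arcsin √(3 / 4 * momentSub ν)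

theorem permutonAngle_mem_Icc (ν : Measure (ℝ × ℝ)) : permutonAngle ν ∈ Icc 0 (π / 2) :=
  ⟨arcsin_nonneg.2 (sqrt_nonneg _), arcsin_le_pi_div_two _⟩

theorem abs_permutonAngle_sub_le_pi (ν ν' : Measure (ℝ × ℝ)) :
    |permutonAngle ν - permutonAngle ν'| ≤ π := by
  have h := permutonAngle_mem_Icc ν
  have h' := permutonAngle_mem_Icc ν'
  exact abs_le.2 ⟨by linarith [h.1, h'.2, pi_pos], by linarith [h.2, h'.1, pi_pos]⟩

theorem IsPermuton.sin_permutonAngle (h : IsPermuton ν) :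
    sin (permutonAngle ν) = √(3 / 4 * momentSub ν) := by
  have hK := momentAdd_nonneg ν
  refine sin_arcsin (by linarith [sqrt_nonneg (3 / 4 * momentSub ν)]) ?_
  rw [sqrt_le_one]
  linarith [momentSub_add_momentAdd h]

theorem IsPermuton.cos_permutonAngle (h : IsPermuton ν) :
    cos (permutonAngle ν) = √(3 / 4 * momentAdd ν) := by
  have hJ := momentSub_nonneg ν
  rw [permutonAngle, cos_arcsin, sq_sqrt (by positivity)]
  congr 1
  linarith [momentSub_add_momentAdd h]

theorem permutonAngle_idPermuton : permutonAngle idPermuton = 0 := by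
  simp [permutonAngle, momentSub_idPermuton]

theorem IsPermuton.permutonAngle_of_momentAdd_eq_zero (h : IsPermuton ν)
    (hK : momentAdd ν = 0) : permutonAngle ν = π / 2 := by
  have hJ : momentSub ν = 4 / 3 := by linarith [momentSub_add_momentAdd h]
  norm_num [permutonAngle, hJ]

theorem sq_sin_sub_sin_add_sq_cos_sub_cos (a b : ℝ) :
    (sin a - sin b) ^ 2 + (cos a - cos b) ^ 2
      = (2 * sin ((a - b) / 2)) ^ 2 := by
  have h := sin_sq_eq_half_sub ((a - b) / 2)
  rw [show 2 * ((a - b) / 2) = a - b by ring] at h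
  linear_combination sin_sq_add_cos_sq a + sin_sq_add_cos_sq b + 2 * cos_sub a b
    - 4 * h

theorem chord_sq_le_W2sqE (hs : IsPermuton νs) (ht : IsPermuton νt) :
    2 / 3 * (2 * sin ((permutonAngle νt - permutonAngle νs) / 2)) ^ 2 ≤ W2sqE νs νt := by
  have hsq : ∀ x : ℝ, 0 ≤ x → √(3 / 4 * x) = √3 / 2 * √x := fun x hx => by
    rw [sqrt_mul (by norm_num), sqrt_div' _ (by norm_num : (0 : ℝ) ≤ 4),
      show (4 : ℝ) = 2 ^ 2 by norm_num, sqrt_sq (by norm_num)]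
  have h3 : √3 ^ 2 = 3 := sq_sqrt (by norm_num)
  refine le_trans (le_of_eq ?_) (le_W2sqE_of_isPermuton hs ht)
  rw [← sq_sin_sub_sin_add_sq_cos_sub_cos, hs.sin_permutonAngle, ht.sin_permutonAngle,
    hs.cos_permutonAngle, ht.cos_permutonAngle, hsq _ (momentSub_nonneg νs),
    hsq _ (momentSub_nonneg νt), hsq _ (momentAdd_nonneg νs),
    hsq _ (momentAdd_nonneg νt)]
  linear_combination (1 / 6 * ((√(momentSub νt) - √(momentSub νs)) ^ 2
    + (√(momentAdd νt) - √(momentAdd νs)) ^ 2)) * h3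

end Angle

theorem isPartition_div {n : ℕ} (hn : 0 < n) : IsPartition n fun i => (i : ℝ) / n := by
  have hn' : (0 : ℝ) < n := Nat.cast_pos.2 hn
  refine ⟨hn, by simp, div_self hn'.ne', fun i _ => ?_⟩
  exact div_lt_div_of_pos_right (by push_cast; linarith) hn'

theorem ofReal_mul_sum_le_energyOf (D : ℝ → ℝ → ℝ) {n : ℕ} (hn : 0 < n) :
    ENNReal.ofReal (n * ∑ i ∈ Finset.range n, D (i / n) ((i + 1) / n)) ≤ energyOf D := by
  have hn' : (n : ℝ) ≠ 0 := Nat.cast_ne_zero.2 hn.ne'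
  refine le_of_eq_of_le ?_ (le_iSup₂_of_le n _ (le_iSup_of_le (isPartition_div hn) le_rfl))
  rw [Finset.mul_sum]
  congr 1
  refine Finset.sum_congr rfl fun i _ => ?_
  push_cast
  field_simp
  ring

theorem mul_abs_le_abs_sin_of_sin_sq_le {y δ : ℝ} (hy : |y| ≤ π / 2) (hδ : sin y ^ 2 ≤ δ) :
    (1 - π ^ 2 * δ / 24) * |y| ≤ |sin y| := by
  have hjordan := mul_abs_le_abs_sin hy
  have hcube := abs_sub_sin_le y
  have hsmall : |y| ^ 2 ≤ π ^ 2 / 4 * δ := by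
    have hπ := pi_pos
    calc |y| ^ 2 = (π / 2) ^ 2 * (2 / π * |y|) ^ 2 := by field_simp
      _ ≤ (π / 2) ^ 2 * |sin y| ^ 2 := by gcongr
      _ ≤ π ^ 2 / 4 * δ := by rw [sq_abs, div_pow]; norm_num; gcongr
  have := abs_sub_abs_le_abs_sub y (sin y)
  nlinarith [abs_nonneg y]

theorem mul_abs_sum_le_sqrt_of_chord_sum_le {n : ℕ} (hn : 0 < n) {x : ℕ → ℝ} {e : ℝ}
    (hx : ∀ i ∈ Finset.range n, |x i| ≤ π)
    (he : n * ∑ i ∈ Finset.range n, (2 * sin (x i / 2)) ^ 2 ≤ e) :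
    (1 - π ^ 2 * e / 96 / n) * |∑ i ∈ Finset.range n, x i| ≤ √e := by
  set c := 1 - π ^ 2 * e / 96 / n
  set s := fun i => sin (x i / 2)
  have hn' : (0 : ℝ) < n := Nat.cast_pos.2 hn
  rcases lt_or_ge c 0 with hc | hc
  · nlinarith [abs_nonneg (∑ i ∈ Finset.range n, x i), sqrt_nonneg e]
  have hsum_sq : ∑ i ∈ Finset.range n, s i ^ 2 ≤ e / (4 * n) := by
    rw [le_div_iff₀ (by positivity)]
    simp only [mul_pow, ← Finset.mul_sum] at he
    linarith
  have hterm : ∀ i ∈ Finset.range n, c * |x i / 2| ≤ |s i| := fun i hi => by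
    have hδ : s i ^ 2 ≤ e / (4 * n) :=
      (Finset.single_le_sum (fun j _ => sq_nonneg (s j)) hi).trans hsum_sq
    convert mul_abs_le_abs_sin_of_sin_sq_le (by rw [abs_div]; linarith [hx i hi]) hδ using 2
    simp only [c]
    field_simp
    ring
  have hsum_abs : ∑ i ∈ Finset.range n, |s i| ≤ √e / 2 := by
    have hcs := sq_sum_le_card_mul_sum_sq (s := Finset.range n) (f := fun i => |s i|)
    simp only [sq_abs, Finset.card_range] at hcs
    have hsqrt : √e / 2 = √(e / 4) := by
      rw [sqrt_div' _ (by norm_num : (0 : ℝ) ≤ 4), show (4 : ℝ) = 2 ^ 2 by norm_num,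
        sqrt_sq (by norm_num)]
    rw [hsqrt]
    refine le_sqrt_of_sq_le (hcs.trans ?_)
    calc (n : ℝ) * ∑ i ∈ Finset.range n, s i ^ 2 ≤ n * (e / (4 * n)) := by gcongr
      _ = e / 4 := by field_simp
  calc c * |∑ i ∈ Finset.range n, x i|
      = 2 * (c * |∑ i ∈ Finset.range n, x i / 2|) := by
        rw [← Finset.sum_div, abs_div, abs_two]; ring
    _ ≤ 2 * ∑ i ∈ Finset.range n, c * |x i / 2| := by
        rw [← Finset.mul_sum]; gcongr; exact Finset.abs_sum_le_sum_abs _ _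
    _ ≤ 2 * ∑ i ∈ Finset.range n, |s i| := by gcongr with i hi; exact hterm i hi
    _ ≤ √e := by linarith

theorem ofReal_mul_sq_le_energyOf {D : ℝ → ℝ → ℝ} {θ : ℝ → ℝ} {c : ℝ}
    (hθ : ∀ s ∈ Icc (0 : ℝ) 1, ∀ t ∈ Icc (0 : ℝ) 1, |θ t - θ s| ≤ π)
    (hD : ∀ s ∈ Icc (0 : ℝ) 1, ∀ t ∈ Icc (0 : ℝ) 1,
      c * (2 * sin ((θ t - θ s) / 2)) ^ 2 ≤ D s t) :
    ENNReal.ofReal (c * (θ 1 - θ 0) ^ 2) ≤ energyOf D := by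
  rcases eq_or_ne (energyOf D) ⊤ with htop | htop
  · simp [htop]
  rcases le_or_gt c 0 with hc | hc
  · simp [ENNReal.ofReal_of_nonpos (mul_nonpos_of_nonpos_of_nonneg hc (sq_nonneg _))]
  set e := (energyOf D).toReal / c
  have hbound : ∀ n : ℕ, 0 < n → (1 - π ^ 2 * e / 96 / n) * |θ 1 - θ 0| ≤ √e := by
    intro n hn
    have hn' : (0 : ℝ) < n := Nat.cast_pos.2 hn
    have hmem : ∀ i ≤ n, (i : ℝ) / n ∈ Icc 0 1 := fun i hi =>
      ⟨by positivity, (div_le_one hn').2 (by exact_mod_cast hi)⟩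
    have hsum : ∑ i ∈ Finset.range n, (θ ((i + 1 : ℕ) / n) - θ (i / n)) = θ 1 - θ 0 := by
      rw [Finset.sum_range_sub (fun i : ℕ => θ (i / n)), Nat.cast_zero, zero_div, div_self hn'.ne']
    have hE := (ENNReal.ofReal_le_iff_le_toReal htop).1 (ofReal_mul_sum_le_energyOf D hn)
    rw [← hsum]
    refine mul_abs_sum_le_sqrt_of_chord_sum_le hn (fun i hi => hθ _
      (hmem i (Finset.mem_range.1 hi).le) _ (hmem (i + 1) (Finset.mem_range.1 hi))) ?_
    rw [le_div_iff₀ hc, mul_right_comm, mul_assoc, Finset.mul_sum]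
    refine le_trans ?_ hE
    gcongr with i hi
    simpa using hD _ (hmem i (Finset.mem_range.1 hi).le) _ (hmem (i + 1) (Finset.mem_range.1 hi))
  have hlim : Tendsto (fun n : ℕ => (1 - π ^ 2 * e / 96 / n) * |θ 1 - θ 0|) atTop
      (𝓝 |θ 1 - θ 0|) := by
    simpa using ((tendsto_const_div_atTop_nhds_zero_nat (π ^ 2 * e / 96)).const_sub 1).mul_const
      |θ 1 - θ 0|
  have habs : |θ 1 - θ 0| ≤ √e := le_of_tendsto hlim ((eventually_gt_atTop 0).mono hbound)
  have hsq : (θ 1 - θ 0) ^ 2 ≤ e := by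
    rw [← sq_abs]
    exact (le_sqrt (abs_nonneg _) (by positivity)).1 habs
  rw [← ENNReal.ofReal_toReal htop]
  exact ENNReal.ofReal_le_ofReal ((le_div_iff₀' hc).1 hsq)

/-- any permuton-valued path from the identity permuton to the reverse
permuton has energy at least π²/6 in the 2-Wasserstein metric. -/
theorem permuton_path_energy_ge
    (μ : ℝ → Measure (ℝ × ℝ))
    (hperm : ∀ t ∈ Icc (0:ℝ) 1, IsPermuton (μ t))
    (h0 : μ 0 = idPermuton) (h1 : μ 1 = revPermuton) :
    ENNReal.ofReal (π ^ 2 / 6) ≤ energyOf (fun s t => W2sqE (μ s) (μ t)) := by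
  set θ := fun t => permutonAngle (μ t)
  have hθ : ∀ s ∈ Icc (0 : ℝ) 1, ∀ t ∈ Icc (0 : ℝ) 1, |θ t - θ s| ≤ π := fun s _ t _ =>
    abs_permutonAngle_sub_le_pi (μ t) (μ s)
  have hθ0 : θ 0 = 0 := by simp [θ, h0, permutonAngle_idPermuton]
  have hθ1 : θ 1 = π / 2 :=
    (hperm 1 (by norm_num)).permutonAngle_of_momentAdd_eq_zero (h1 ▸ momentAdd_revPermuton)
  have := ofReal_mul_sq_le_energyOf hθ fun s hs t ht => chord_sq_le_W2sqE (hperm s hs) (hperm t ht)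
  rwa [hθ0, hθ1, show 2 / 3 * (π / 2 - 0) ^ 2 = π ^ 2 / 6 by ring] at this
end

section
/- Let H be a real Hilbert space and let γ : [0,1] → H be a continuous path lying on the unit sphere of H with γ(1) = −γ(0). If the energy of γ with respect to the norm metric equals π², then γ(t) = cos(πt)·γ(0) + sin(πt)·γ(1/2) for every t ∈ [0,1]. Conversely, any path of this form has energy π². -/
/-!
Write `∠` for the angle between unit vectors. Refining a partition of `[0,1]` so finely that chord
and angle agree up to a factor close to `1` on each small step, the triangle inequality for `∠`
and Sedrakyan's inequality give `Σ ∠(γ tᵢ, γ tᵢ₊₁)² / (tᵢ₊₁ - tᵢ) ≤ E(γ)` for every partition.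
The trivial partition yields `E(γ) ≥ ∠(γ 0, -γ 0)² = π²`. If `E(γ) = π²`, the partition
`0 < s < t < 1` and `π ≤ ∠(γ 0, γ s) + ∠(γ s, γ t) + ∠(γ t, γ 1)` force the equality case of
Cauchy–Schwarz, so `∠(γ s, γ t) = π (t - s)`. Thus `⟪γ s, γ t⟫ = cos (π (t - s))` on `[0,1]²`,
which pins `γ` to the great circle through `γ 0` and `γ (1/2)`. Conversely, on that circle
`d(γ s, γ t)² = 2 - 2 cos (π (t - s)) ≤ π² (t - s)²`, whence `E(γ) ≤ π²`.
-/

open MeasureTheory Set Filter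
open scoped ENNReal Real Topology

open InnerProductGeometry Finset
open scoped RealInnerProductSpace

lemma eq_mul_of_sq_div_add_sq_div_add_sq_div_le {a b c x y z L : ℝ} (hx : 0 < x) (hy : 0 < y)
    (hz : 0 < z) (hxyz : x + y + z = 1) (hL : 0 ≤ L) (habc : L ≤ a + b + c)
    (h : a ^ 2 / x + b ^ 2 / y + c ^ 2 / z ≤ L ^ 2) : b = L * y := by
  have expand : ∀ {r w : ℝ}, 0 < w → (r - L * w) ^ 2 / w = r ^ 2 / w - 2 * L * r + L ^ 2 * w :=
    fun hw => by field_simp; ring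
  have hsum : (a - L * x) ^ 2 / x + (b - L * y) ^ 2 / y + (c - L * z) ^ 2 / z ≤ 0 := by
    rw [expand hx, expand hy, expand hz]
    nlinarith
  have hb : (b - L * y) ^ 2 / y ≤ 0 := by
    linarith [div_nonneg (sq_nonneg (a - L * x)) hx.le, div_nonneg (sq_nonneg (c - L * z)) hz.le]
  rw [div_le_iff₀ hy, zero_mul] at hb
  linarith [pow_eq_zero_iff two_ne_zero |>.1 (le_antisymm hb (sq_nonneg _))]

lemma exists_pos_forall_mul_le_sin {c : ℝ} (hc : c < 1) :
    ∃ η > 0, ∀ x, 0 ≤ x → x < η → c * x ≤ Real.sin x := by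
  obtain ⟨η, hη, hsinc⟩ :=
    Metric.continuousAt_iff.1 Real.continuous_sinc.continuousAt (1 - c) (by linarith)
  refine ⟨η, hη, fun x hx0 hxη => ?_⟩
  rcases hx0.eq_or_lt with rfl | hx
  · simp
  have hdist := hsinc (x := x) (by rwa [Real.dist_eq, sub_zero, abs_of_nonneg hx0])
  rw [Real.sinc_zero, Real.dist_eq, Real.sinc_of_ne_zero hx.ne'] at hdist
  have : c < Real.sin x / x := by linarith [neg_abs_le (Real.sin x / x - 1)]
  exact ((lt_div_iff₀ hx).1 this).le

section UnitVectors

variable {V : Type*} [NormedAddCommGroup V] [InnerProductSpace ℝ V]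

lemma norm_sub_eq_two_mul_sin_angle_div_two {u v : V} (hu : ‖u‖ = 1) (hv : ‖v‖ = 1) :
    ‖u - v‖ = 2 * Real.sin (angle u v / 2) := by
  have hsin : 0 ≤ Real.sin (angle u v / 2) :=
    Real.sin_nonneg_of_nonneg_of_le_pi (by linarith [angle_nonneg u v])
      (by linarith [angle_le_pi u v, Real.pi_pos])
  have hsq : ‖u - v‖ ^ 2 = (2 * Real.sin (angle u v / 2)) ^ 2 := by
    rw [sq ‖u - v‖, norm_sub_sq_eq_norm_sq_add_norm_sq_sub_two_mul_norm_mul_norm_mul_cos_angle,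
      hu, hv, mul_pow, Real.sin_sq_eq_half_sub, mul_div_cancel₀ _ two_ne_zero]
    ring
  exact (pow_left_inj₀ (norm_nonneg _) (by positivity) two_ne_zero).1 hsq

lemma exists_pos_forall_mul_angle_le_norm_sub {c : ℝ} (hc : c < 1) :
    ∃ δ > 0, ∀ u v : V, ‖u‖ = 1 → ‖v‖ = 1 → ‖u - v‖ ≤ δ → c * angle u v ≤ ‖u - v‖ := by
  obtain ⟨η, hη, hsin⟩ := exists_pos_forall_mul_le_sin hc
  refine ⟨η, hη, fun u v hu hv huv => ?_⟩
  have hchord := norm_sub_eq_two_mul_sin_angle_div_two hu hv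
  have hx0 : 0 ≤ angle u v / 2 := by linarith [angle_nonneg u v]
  -- Jordan's inequality `2x/π ≤ sin x` bounds the half-angle by `π/4` times the chord.
  have hjordan := Real.mul_le_sin hx0 (by linarith [angle_le_pi u v])
  have hxη : angle u v / 2 < η := by
    have : 2 / π * (angle u v / 2) * π ≤ η / 2 * π := by gcongr; linarith
    rw [div_mul_eq_mul_div, div_mul_cancel₀ _ Real.pi_ne_zero] at this
    nlinarith [Real.pi_lt_four]
  linarith [hsin _ hx0 hxη]

lemma angle_le_sum_angle (v : ℕ → V) (hv : v 0 ≠ 0) (n : ℕ) :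
    angle (v 0) (v n) ≤ ∑ i ∈ range n, angle (v i) (v (i + 1)) := by
  induction n with
  | zero => simp [angle_self hv]
  | succ n ih =>
    rw [sum_range_succ]
    linarith [angle_le_angle_add_angle (v 0) (v n) (v (n + 1))]

lemma sq_mul_angle_div_sum_le_sum_sq_norm_sub_div {c : ℝ} (hc : 0 ≤ c) (v : ℕ → V)
    (hv : v 0 ≠ 0) {w : ℕ → ℝ} {n : ℕ} (hw : ∀ j < n, 0 < w j)
    (hcomp : ∀ j < n, c * angle (v j) (v (j + 1)) ≤ ‖v j - v (j + 1)‖) :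
    (c * angle (v 0) (v n)) ^ 2 / ∑ j ∈ range n, w j ≤
      ∑ j ∈ range n, ‖v j - v (j + 1)‖ ^ 2 / w j := by
  have hchain : c * angle (v 0) (v n) ≤ ∑ j ∈ range n, ‖v j - v (j + 1)‖ :=
    calc c * angle (v 0) (v n) ≤ ∑ j ∈ range n, c * angle (v j) (v (j + 1)) := by
          rw [← mul_sum]; exact mul_le_mul_of_nonneg_left (angle_le_sum_angle v hv n) hc
      _ ≤ _ := sum_le_sum fun j hj => hcomp j (mem_range.1 hj)
  calc (c * angle (v 0) (v n)) ^ 2 / ∑ j ∈ range n, w j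
      ≤ (∑ j ∈ range n, ‖v j - v (j + 1)‖) ^ 2 / ∑ j ∈ range n, w j := by
        gcongr
        · exact sum_nonneg fun j hj => (hw j (mem_range.1 hj)).le
        · exact mul_nonneg hc (angle_nonneg _ _)
    _ ≤ _ := sq_sum_div_le_sum_sq_div _ _ fun j hj => hw j (mem_range.1 hj)

lemma inner_cos_smul_add_sin_smul {x y : V} (hx : ‖x‖ = 1) (hy : ‖y‖ = 1) (hxy : ⟪x, y⟫ = 0)
    (a b : ℝ) :
    ⟪Real.cos a • x + Real.sin a • y, Real.cos b • x + Real.sin b • y⟫ = Real.cos (b - a) := by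
  simp only [inner_add_left, inner_add_right, real_inner_smul_left, real_inner_smul_right,
    inner_self_eq_one_of_norm_eq_one hx, inner_self_eq_one_of_norm_eq_one hy, hxy,
    real_inner_comm x y, Real.cos_sub]
  ring

lemma inner_eq_zero_of_norm_cos_smul_add_sin_smul {x y : V} (hx : ‖x‖ = 1) (hy : ‖y‖ = 1) {θ : ℝ}
    (hθ : Real.sin (2 * θ) ≠ 0) (h : ‖Real.cos θ • x + Real.sin θ • y‖ = 1) : ⟪x, y⟫ = 0 := by
  have hsq : ‖Real.cos θ • x + Real.sin θ • y‖ ^ 2 = 1 + Real.sin (2 * θ) * ⟪x, y⟫ := by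
    rw [← real_inner_self_eq_norm_sq]
    simp only [inner_add_left, inner_add_right, real_inner_smul_left, real_inner_smul_right,
      inner_self_eq_one_of_norm_eq_one hx, inner_self_eq_one_of_norm_eq_one hy,
      real_inner_comm x y, Real.sin_two_mul]
    linear_combination Real.cos_sq_add_sin_sq θ
  rw [h, one_pow, left_eq_add, mul_eq_zero] at hsq
  exact hsq.resolve_left hθ

lemma eq_cos_smul_add_sin_smul {x y z : V} (hx : ‖x‖ = 1) (hy : ‖y‖ = 1) (hz : ‖z‖ = 1)
    (hxy : ⟪x, y⟫ = 0) {θ : ℝ} (hxz : ⟪x, z⟫ = Real.cos θ) (hyz : ⟪y, z⟫ = Real.sin θ) :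
    z = Real.cos θ • x + Real.sin θ • y := by
  have hsq : ‖z - (Real.cos θ • x + Real.sin θ • y)‖ ^ 2 = 0 := by
    rw [← real_inner_self_eq_norm_sq]
    simp only [inner_sub_left, inner_sub_right, inner_add_left, inner_add_right,
      real_inner_smul_left, real_inner_smul_right, inner_self_eq_one_of_norm_eq_one hx,
      inner_self_eq_one_of_norm_eq_one hy, inner_self_eq_one_of_norm_eq_one hz,
      real_inner_comm x y, real_inner_comm x z, real_inner_comm y z, hxy, hxz, hyz]
    linear_combination -Real.cos_sq_add_sin_sq θ
  rwa [sq_eq_zero_iff, norm_eq_zero, sub_eq_zero] at hsq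

end UnitVectors

lemma Finset.sum_range_mul_eq_sum_sum {M : Type*} [AddCommMonoid M] (f : ℕ → M) (k n : ℕ) :
    ∑ m ∈ range (k * n), f m = ∑ i ∈ range k, ∑ j ∈ range n, f (i * n + j) := by
  induction k with
  | zero => simp
  | succ k ih => rw [Nat.succ_mul, sum_range_add, ih, sum_range_succ]

/-- The partition `t` with each of its intervals cut into `n` equal pieces. -/
noncomputable def refinePartition (t : ℕ → ℝ) (n m : ℕ) : ℝ :=
  t (m / n) + (m % n : ℕ) / n * (t (m / n + 1) - t (m / n))

lemma refinePartition_mul_add (t : ℕ → ℝ) {n : ℕ} (hn : 0 < n) (i : ℕ) {j : ℕ} (hj : j ≤ n) :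
    refinePartition t n (i * n + j) = t i + j / n * (t (i + 1) - t i) := by
  rcases hj.lt_or_eq with hj | hj
  · have hdiv : (i * n + j) / n = i := by
      rw [mul_comm, Nat.mul_add_div hn, Nat.div_eq_of_lt hj, add_zero]
    rw [refinePartition, hdiv, mul_comm, Nat.mul_add_mod_of_lt hj]
    ring
  · rw [hj]
    have hdiv : (i * n + n) / n = i + 1 := by
      rw [← Nat.succ_mul, Nat.mul_div_cancel _ hn]
    rw [refinePartition, hdiv, ← Nat.succ_mul, Nat.mul_mod_left, div_self (by positivity)]
    simp

lemma refinePartition_mul (t : ℕ → ℝ) {n : ℕ} (hn : 0 < n) (i : ℕ) :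
    refinePartition t n (i * n) = t i := by
  simpa using refinePartition_mul_add t hn i (Nat.zero_le n)

lemma refinePartition_mul_add_succ_sub (t : ℕ → ℝ) {n : ℕ} (hn : 0 < n) (i : ℕ) {j : ℕ}
    (hj : j < n) :
    refinePartition t n (i * n + j + 1) - refinePartition t n (i * n + j) =
      (t (i + 1) - t i) / n := by
  rw [add_assoc, refinePartition_mul_add t hn i hj, refinePartition_mul_add t hn i hj.le]
  push_cast
  ring

lemma exists_eq_mul_add_of_lt_mul {k n m : ℕ} (hm : m < k * n) :
    ∃ i < k, ∃ j < n, m = i * n + j :=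
  have hn : 0 < n := Nat.pos_of_mul_pos_left (Nat.zero_lt_of_lt hm)
  ⟨m / n, Nat.div_lt_of_lt_mul (by rwa [mul_comm] at hm), m % n, Nat.mod_lt m hn,
    (Nat.div_add_mod' m n).symm⟩

namespace IsPartition

variable {k : ℕ} {t : ℕ → ℝ}

lemma le_of_le (hp : IsPartition k t) {i j : ℕ} (hij : i ≤ j) (hjk : j ≤ k) : t i ≤ t j := by
  induction j, hij using Nat.le_induction with
  | base => rfl
  | succ j _ ih => exact (ih (by omega)).trans (hp.2.2.2 j (by omega)).le

lemma mem_Icc (hp : IsPartition k t) {i : ℕ} (hi : i ≤ k) : t i ∈ Icc (0 : ℝ) 1 :=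
  ⟨hp.2.1 ▸ hp.le_of_le (Nat.zero_le i) hi, hp.2.2.1 ▸ hp.le_of_le hi le_rfl⟩

lemma sub_pos (hp : IsPartition k t) {i : ℕ} (hi : i < k) : 0 < t (i + 1) - t i :=
  _root_.sub_pos.2 (hp.2.2.2 i hi)

lemma sum_sub (hp : IsPartition k t) : ∑ i ∈ range k, (t (i + 1) - t i) = 1 := by
  rw [sum_range_sub, hp.2.1, hp.2.2.1, sub_zero]

lemma refine (hp : IsPartition k t) {n : ℕ} (hn : 0 < n) :
    IsPartition (k * n) (refinePartition t n) := by
  refine ⟨Nat.mul_pos hp.1 hn, ?_, ?_, fun m hm => ?_⟩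
  · rw [← zero_mul n, refinePartition_mul t hn, hp.2.1]
  · rw [refinePartition_mul t hn, hp.2.2.1]
  · obtain ⟨i, hi, j, hj, rfl⟩ := exists_eq_mul_add_of_lt_mul hm
    have := refinePartition_mul_add_succ_sub t hn i hj
    have := div_pos (hp.sub_pos hi) (Nat.cast_pos.2 hn)
    linarith

lemma refinePartition_succ_sub_le (hp : IsPartition k t) {n : ℕ} (hn : 0 < n) {m : ℕ}
    (hm : m < k * n) :
    refinePartition t n (m + 1) - refinePartition t n m ≤ 1 / n := by
  obtain ⟨i, hi, j, hj, rfl⟩ := exists_eq_mul_add_of_lt_mul hm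
  rw [refinePartition_mul_add_succ_sub t hn i hj]
  gcongr
  linarith [(hp.mem_Icc hi.le).1, (hp.mem_Icc hi).2]

end IsPartition

lemma ofReal_sum_le_energyOf (D : ℝ → ℝ → ℝ) {k : ℕ} {t : ℕ → ℝ} (hp : IsPartition k t) :
    ENNReal.ofReal (∑ i ∈ range k, D (t i) (t (i + 1)) / (t (i + 1) - t i)) ≤ energyOf D :=
  le_iSup₂_of_le k t (le_iSup_of_le hp le_rfl)

lemma energyOf_le_ofReal_sq {D : ℝ → ℝ → ℝ} {L : ℝ}
    (hD : ∀ s ∈ Icc (0 : ℝ) 1, ∀ t ∈ Icc (0 : ℝ) 1, s < t → D s t ≤ L ^ 2 * (t - s) ^ 2) :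
    energyOf D ≤ ENNReal.ofReal (L ^ 2) := by
  refine iSup₂_le fun k t => iSup_le fun hp => ENNReal.ofReal_le_ofReal ?_
  calc ∑ i ∈ range k, D (t i) (t (i + 1)) / (t (i + 1) - t i)
      ≤ ∑ i ∈ range k, L ^ 2 * (t (i + 1) - t i) := by
        refine sum_le_sum fun i hi => ?_
        have hi := mem_range.1 hi
        have hpos := hp.sub_pos hi
        rw [div_le_iff₀ hpos]
        nlinarith [hD _ (hp.mem_Icc hi.le) _ (hp.mem_Icc hi) (by linarith)]
    _ = L ^ 2 := by rw [← mul_sum, hp.sum_sub, mul_one]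

section SpherePath

variable {H : Type*} [NormedAddCommGroup H] [InnerProductSpace ℝ H] {γ : ℝ → H}

lemma sq_mul_sum_sq_angle_div_le (hsph : ∀ t ∈ Icc (0 : ℝ) 1, ‖γ t‖ = 1) {k N : ℕ}
    {t : ℕ → ℝ} (hp : IsPartition k t) (hN : 0 < N) {c : ℝ} (hc : 0 ≤ c)
    (hcomp : ∀ m < k * N, c * angle (γ (refinePartition t N m)) (γ (refinePartition t N (m + 1)))
      ≤ ‖γ (refinePartition t N m) - γ (refinePartition t N (m + 1))‖) :
    c ^ 2 * ∑ i ∈ range k, angle (γ (t i)) (γ (t (i + 1))) ^ 2 / (t (i + 1) - t i) ≤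
      ∑ m ∈ range (k * N), dist (γ (refinePartition t N m)) (γ (refinePartition t N (m + 1))) ^ 2
        / (refinePartition t N (m + 1) - refinePartition t N m) := by
  set q := refinePartition t N
  have hq := hp.refine hN
  simp_rw [mul_sum, ← mul_div_assoc, ← mul_pow, sum_range_mul_eq_sum_sum, dist_eq_norm]
  refine sum_le_sum fun i hi => ?_
  have hlt : ∀ j < N, i * N + j < k * N := fun j hj => by nlinarith [mem_range.1 hi]
  have h := sq_mul_angle_div_sum_le_sum_sq_norm_sub_div hc (fun j => γ (q (i * N + j))) (n := N)
    (w := fun j => q (i * N + (j + 1)) - q (i * N + j))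
    (norm_ne_zero_iff.1 (by rw [hsph _ (hq.mem_Icc (hlt 0 hN).le)]; exact one_ne_zero))
    (fun j hj => hq.sub_pos (hlt j hj)) (fun j hj => hcomp _ (hlt j hj))
  have hstart : q (i * N) = t i := refinePartition_mul t hN i
  have hend : q ((i + 1) * N) = t (i + 1) := refinePartition_mul t hN (i + 1)
  rwa [sum_range_sub (fun j => q (i * N + j)), add_zero, ← add_one_mul, hstart, hend] at h

theorem ofReal_sum_sq_angle_div_le_energyOf (hcont : ContinuousOn γ (Icc 0 1))
    (hsph : ∀ t ∈ Icc (0 : ℝ) 1, ‖γ t‖ = 1) {k : ℕ} {t : ℕ → ℝ} (hp : IsPartition k t) :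
    ENNReal.ofReal (∑ i ∈ range k, angle (γ (t i)) (γ (t (i + 1))) ^ 2 / (t (i + 1) - t i)) ≤
      energyOf (fun s t => dist (γ s) (γ t) ^ 2) := by
  refine ENNReal.le_of_forall_lt_one_mul_le fun a ha => ?_
  set c := √a.toReal
  have hc : c < 1 := by
    rw [Real.sqrt_lt' one_pos, one_pow]
    simpa using (ENNReal.toReal_lt_toReal ha.ne_top ENNReal.one_ne_top).2 ha
  obtain ⟨δ, hδ, hcomp⟩ := exists_pos_forall_mul_angle_le_norm_sub (V := H) hc
  obtain ⟨δ', hδ', hγδ⟩ := Metric.uniformContinuousOn_iff.1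
    (isCompact_Icc.uniformContinuousOn_of_continuous hcont) δ hδ
  obtain ⟨N, hN, hNδ⟩ : ∃ N : ℕ, 0 < N ∧ 1 / (N : ℝ) < δ' := by
    obtain ⟨n, hn⟩ := exists_nat_one_div_lt hδ'
    exact ⟨n + 1, n.succ_pos, by exact_mod_cast hn⟩
  have hq := hp.refine hN
  have hfine : ∀ m < k * N,
      dist (γ (refinePartition t N m)) (γ (refinePartition t N (m + 1))) < δ := fun m hm => by
    refine hγδ _ (hq.mem_Icc hm.le) _ (hq.mem_Icc hm) ?_
    rw [Real.dist_eq, abs_sub_comm, abs_of_pos (hq.sub_pos hm)]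
    exact (hp.refinePartition_succ_sub_le hN hm).trans_lt hNδ
  have hsum := sq_mul_sum_sq_angle_div_le hsph hp hN (Real.sqrt_nonneg _) fun m hm =>
    hcomp _ _ (hsph _ (hq.mem_Icc hm.le)) (hsph _ (hq.mem_Icc hm))
      (by rw [← dist_eq_norm]; exact (hfine m hm).le)
  calc a * ENNReal.ofReal
        (∑ i ∈ range k, angle (γ (t i)) (γ (t (i + 1))) ^ 2 / (t (i + 1) - t i))
      = ENNReal.ofReal
        (c ^ 2 * ∑ i ∈ range k, angle (γ (t i)) (γ (t (i + 1))) ^ 2 / (t (i + 1) - t i)) := by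
        rw [ENNReal.ofReal_mul (sq_nonneg c), Real.sq_sqrt ENNReal.toReal_nonneg,
          ENNReal.ofReal_toReal ha.ne_top]
    _ ≤ energyOf (fun s t => dist (γ s) (γ t) ^ 2) :=
        (ENNReal.ofReal_le_ofReal hsum).trans (ofReal_sum_le_energyOf _ hq)

lemma inner_eq_cos_of_eq_cos_smul_add_sin_smul (hsph : ∀ t ∈ Icc (0 : ℝ) 1, ‖γ t‖ = 1)
    (hγ : ∀ t ∈ Icc (0 : ℝ) 1, γ t = Real.cos (π * t) • γ 0 + Real.sin (π * t) • γ (1 / 2)) :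
    ∀ s ∈ Icc (0 : ℝ) 1, ∀ t ∈ Icc (0 : ℝ) 1, ⟪γ s, γ t⟫ = Real.cos (π * (t - s)) := by
  have hx := hsph 0 (by norm_num)
  have hy := hsph (1 / 2) (by norm_num)
  have horth : ⟪γ 0, γ (1 / 2)⟫ = 0 := by
    refine inner_eq_zero_of_norm_cos_smul_add_sin_smul hx hy (θ := π / 4) ?_ ?_
    · rw [show 2 * (π / 4) = π / 2 by ring, Real.sin_pi_div_two]
      exact one_ne_zero
    · rw [show π / 4 = π * (1 / 4) by ring, ← hγ _ (by norm_num), hsph _ (by norm_num)]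
  intro s hs t ht
  rw [hγ s hs, hγ t ht, inner_cos_smul_add_sin_smul hx hy horth, mul_sub]

lemma eq_cos_smul_add_sin_smul_of_inner_eq_cos (hsph : ∀ t ∈ Icc (0 : ℝ) 1, ‖γ t‖ = 1)
    (hγ : ∀ s ∈ Icc (0 : ℝ) 1, ∀ t ∈ Icc (0 : ℝ) 1, ⟪γ s, γ t⟫ = Real.cos (π * (t - s))) :
    ∀ t ∈ Icc (0 : ℝ) 1, γ t = Real.cos (π * t) • γ 0 + Real.sin (π * t) • γ (1 / 2) := by
  intro t ht
  have h0 : (0 : ℝ) ∈ Icc (0 : ℝ) 1 := by norm_num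
  have hhalf : (1 / 2 : ℝ) ∈ Icc (0 : ℝ) 1 := by norm_num
  refine eq_cos_smul_add_sin_smul (hsph 0 h0) (hsph _ hhalf) (hsph t ht) ?_ ?_ ?_
  · rw [hγ 0 h0 _ hhalf, sub_zero, mul_one_div, Real.cos_pi_div_two]
  · rw [hγ 0 h0 t ht, sub_zero]
  · rw [hγ _ hhalf t ht, ← Real.cos_sub_pi_div_two]
    ring_nf

lemma energyOf_le_of_inner_eq_cos (hsph : ∀ t ∈ Icc (0 : ℝ) 1, ‖γ t‖ = 1)
    (hγ : ∀ s ∈ Icc (0 : ℝ) 1, ∀ t ∈ Icc (0 : ℝ) 1, ⟪γ s, γ t⟫ = Real.cos (π * (t - s))) :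
    energyOf (fun s t => dist (γ s) (γ t) ^ 2) ≤ ENNReal.ofReal (π ^ 2) :=
  energyOf_le_ofReal_sq fun s hs t ht _ => by
    rw [dist_eq_norm, norm_sub_sq_real, hsph s hs, hsph t ht, hγ s hs t ht]
    nlinarith [Real.one_sub_sq_div_two_le_cos (x := π * (t - s))]

lemma angle_zero_one_eq_pi (hsph : ∀ t ∈ Icc (0 : ℝ) 1, ‖γ t‖ = 1) (hant : γ 1 = -γ 0) :
    angle (γ 0) (γ 1) = π :=
  hant ▸ angle_self_neg_of_nonzero (norm_ne_zero_iff.1 (by simp [hsph 0 (by norm_num)]))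

variable (hcont : ContinuousOn γ (Icc 0 1)) (hsph : ∀ t ∈ Icc (0 : ℝ) 1, ‖γ t‖ = 1)
  (hant : γ 1 = -γ 0)
include hcont hsph hant

theorem ofReal_pi_sq_le_energyOf :
    ENNReal.ofReal (π ^ 2) ≤ energyOf (fun s t => dist (γ s) (γ t) ^ 2) := by
  have hp : IsPartition 1 (fun i => (i : ℝ)) := ⟨one_pos, by simp, by simp, fun i _ => by simp⟩
  simpa [angle_zero_one_eq_pi hsph hant] using ofReal_sum_sq_angle_div_le_energyOf hcont hsph hp

theorem angle_eq_of_energyOf_le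
    (hE : energyOf (fun s t => dist (γ s) (γ t) ^ 2) ≤ ENNReal.ofReal (π ^ 2))
    {s t : ℝ} (hs : 0 < s) (hst : s < t) (ht : t < 1) :
    angle (γ s) (γ t) = π * (t - s) := by
  let p : ℕ → ℝ := fun | 0 => 0 | 1 => s | 2 => t | _ => 1
  have hp : IsPartition 3 p := ⟨by norm_num, rfl, rfl, fun i hi => by
    interval_cases i <;> simp only [p] <;> linarith⟩
  have hS := (ofReal_sum_sq_angle_div_le_energyOf hcont hsph hp).trans hE
  rw [ENNReal.ofReal_le_ofReal_iff (sq_nonneg π)] at hS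
  simp only [sum_range_succ, sum_range_zero, zero_add, p, sub_zero] at hS
  have htri : π ≤ angle (γ 0) (γ s) + angle (γ s) (γ t) + angle (γ t) (γ 1) := by
    linarith [angle_zero_one_eq_pi hsph hant, angle_le_angle_add_angle (γ 0) (γ s) (γ 1),
      angle_le_angle_add_angle (γ s) (γ t) (γ 1)]
  exact eq_mul_of_sq_div_add_sq_div_add_sq_div_le hs (by linarith) (by linarith) (by ring)
    Real.pi_pos.le htri hS

theorem inner_eq_cos_of_energyOf_le
    (hE : energyOf (fun s t => dist (γ s) (γ t) ^ 2) ≤ ENNReal.ofReal (π ^ 2)) :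
    ∀ s ∈ Icc (0 : ℝ) 1, ∀ t ∈ Icc (0 : ℝ) 1, ⟪γ s, γ t⟫ = Real.cos (π * (t - s)) := by
  have hunit : ∀ {r : ℝ}, r ∈ Ioo (0 : ℝ) 1 → ‖γ r‖ = 1 :=
    fun hr => hsph _ (Ioo_subset_Icc_self hr)
  have hopen : EqOn (fun p : ℝ × ℝ => ⟪γ p.1, γ p.2⟫) (fun p => Real.cos (π * (p.2 - p.1)))
      (Set.Ioo 0 1 ×ˢ Set.Ioo 0 1) := by
    rintro ⟨s, t⟩ ⟨hs, ht⟩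
    dsimp only
    rcases lt_trichotomy s t with h | rfl | h
    · rw [inner_eq_cos_angle_of_norm_eq_one (hunit hs) (hunit ht),
        angle_eq_of_energyOf_le hcont hsph hant hE hs.1 h ht.2]
    · rw [real_inner_self_eq_norm_sq, hunit hs, sub_self, mul_zero, Real.cos_zero, one_pow]
    · rw [real_inner_comm, inner_eq_cos_angle_of_norm_eq_one (hunit ht) (hunit hs),
        angle_eq_of_energyOf_le hcont hsph hant hE ht.1 h hs.2, ← Real.cos_neg]
      ring_nf
  have hcont₂ : ContinuousOn (fun p : ℝ × ℝ => ⟪γ p.1, γ p.2⟫) (Set.Icc 0 1 ×ˢ Set.Icc 0 1) :=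
    (hcont.comp continuousOn_fst fun _ hp => hp.1).inner
      (hcont.comp continuousOn_snd fun _ hp => hp.2)
  have hclosed := hopen.of_subset_closure hcont₂ (by fun_prop)
    (prod_mono Ioo_subset_Icc_self Ioo_subset_Icc_self)
    (by rw [closure_prod_eq, closure_Ioo zero_ne_one])
  exact fun s hs t ht => hclosed (x := (s, t)) ⟨hs, ht⟩

end SpherePath

/-- a continuous path on the unit sphere of a real Hilbert space between two
antipodal points has energy exactly π² if and only if it is the great-circle path
γ(t) = cos(πt)·γ(0) + sin(πt)·γ(1/2). -/
theorem hilbert_sphere_path_energy_eq_iff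
    {H : Type*} [NormedAddCommGroup H] [InnerProductSpace ℝ H]
    (γ : ℝ → H) (hcont : ContinuousOn γ (Icc 0 1))
    (hsph : ∀ t ∈ Icc (0:ℝ) 1, ‖γ t‖ = 1)
    (hant : γ 1 = -γ 0) :
    energyOf (fun s t => dist (γ s) (γ t) ^ 2) = ENNReal.ofReal (π ^ 2) ↔
      ∀ t ∈ Icc (0:ℝ) 1,
        γ t = Real.cos (π * t) • γ 0 + Real.sin (π * t) • γ (1 / 2) := by
  constructor
  · intro hE
    exact eq_cos_smul_add_sin_smul_of_inner_eq_cos hsph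
      (inner_eq_cos_of_energyOf_le hcont hsph hant hE.le)
  · intro hγ
    exact le_antisymm (energyOf_le_of_inner_eq_cos hsph
      (inner_eq_cos_of_eq_cos_smul_add_sin_smul hsph hγ))
      (ofReal_pi_sq_le_energyOf hcont hsph hant)
end
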